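/- arXiv:1408.6046 — 2 statements merged into one kernel-verified Lean document; each statement's English description precedes it below -/
import Mathlib

section
/- In a maximal [r,s,t]-coloring of a graph G, if a singleton-class vertex w_k has no neighbor in a size-3 class X_i, then for every size-2 class U_j: there are at least 3 edges between X_i and U_j, at least 4 edges between {w_k} ∪ X_i and U_j, and some vertex β ∈ U_j has at least 3 neighbors in {w_k} ∪ X_i. -/
open Finset

variable {V : Type*}

/-- `P` is the set of color classes of an `[r,s,t]`-coloring of `G`:
a partition of the vertices into independent sets, with `r` classes of size 3,
`s` classes of size 2 and `t` singleton classes. -/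
def IsRST [Fintype V] [DecidableEq V] (G : SimpleGraph V) (P : Finset (Finset V))
    (r s t : ℕ) : Prop :=
  (∀ v : V, ∃! A, A ∈ P ∧ v ∈ A) ∧
  (∀ A ∈ P, ∀ u ∈ A, ∀ w ∈ A, ¬ G.Adj u w) ∧
  (P.filter (fun A => A.card = 3)).card = r ∧
  (P.filter (fun A => A.card = 2)).card = s ∧
  (P.filter (fun A => A.card = 1)).card = t ∧
  (∀ A ∈ P, A.card = 1 ∨ A.card = 2 ∨ A.card = 3)

/-- A maximal `[r,s,t]`-coloring: for any other `[r',s',t']`-coloring,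
either `r > r'`, or `r = r'` and `s ≥ s'`. -/
def IsMaxRST [Fintype V] [DecidableEq V] (G : SimpleGraph V) (P : Finset (Finset V))
    (r s t : ℕ) : Prop :=
  IsRST G P r s t ∧
  ∀ (P' : Finset (Finset V)) (r' s' t' : ℕ), IsRST G P' r' s' t' →
    r' < r ∨ (r' = r ∧ s' ≤ s)

/-- `eB G X Y` is the number of edges with one endpoint in `X` and the other in `Y`. -/
def eB [Fintype V] [DecidableEq V] (G : SimpleGraph V) [DecidableRel G.Adj]
    (X Y : Finset V) : ℕ :=
  ((X ×ˢ Y).filter fun p => G.Adj p.1 p.2).card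

/-- `G` is equitably `k`-colorable: a proper `k`-coloring whose color classes
have sizes differing pairwise by at most 1. -/
def EqColorable [Fintype V] (G : SimpleGraph V) (k : ℕ) : Prop :=
  ∃ C : V → Fin k, (∀ u v, G.Adj u v → C u ≠ C v) ∧
    ∀ i j : Fin k,
      (Finset.univ.filter fun v => C v = i).card ≤
        (Finset.univ.filter fun v => C v = j).card + 1

/-!
If the six vertices of `{w} ∪ X ∪ U` could be regrouped into two independent triples, replacing
the three classes `{w}`, `X`, `U` by them would give a coloring with one more class of size 3,
contradicting maximality. Each conclusion comes from such a regrouping. A vertex `x ∈ X` without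
neighbours in `U` gives the triples `{x} ∪ U` and `{w} ∪ X \ {x}`; if `w` has no neighbour in `U`,
take `{w} ∪ U` and `X`. Finally, if both vertices of `U = {a, b}` had at most two neighbours in
`{w} ∪ X`, then `w` would be adjacent to exactly one of them, say `a`; a vertex `a₀ ∈ X` not
adjacent to `b` is then the only neighbour of `a` in `X`, and `{w, b, a₀}`, `{a} ∪ X \ {a₀}` are
independent.
-/

section EdgeCount

variable [Fintype V] [DecidableEq V] (G : SimpleGraph V) [DecidableRel G.Adj]

lemma eB_eq_sum_left (S T : Finset V) : eB G S T = ∑ x ∈ S, #{y ∈ T | G.Adj x y} := by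
  simp only [eB, card_filter, sum_product]

lemma eB_eq_sum_right (S T : Finset V) : eB G S T = ∑ y ∈ T, #{x ∈ S | G.Adj x y} := by
  simp only [eB, card_filter, sum_product_right]

lemma eB_singleton_left (w : V) (T : Finset V) : eB G {w} T = #{y ∈ T | G.Adj w y} := by
  rw [eB_eq_sum_left, sum_singleton]

lemma eB_singleton_right (S : Finset V) (β : V) : eB G S {β} = #{x ∈ S | G.Adj x β} := by
  rw [eB_eq_sum_right, sum_singleton]

lemma eB_insert_left {w : V} {S : Finset V} (hw : w ∉ S) (T : Finset V) :
    eB G (insert w S) T = eB G {w} T + eB G S T := by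
  rw [eB_eq_sum_left, sum_insert hw, eB_singleton_left, eB_eq_sum_left]

lemma card_le_eB_of_forall_exists_adj {S T : Finset V} (h : ∀ x ∈ S, ∃ y ∈ T, G.Adj x y) :
    #S ≤ eB G S T := by
  rw [card_eq_sum_ones, eB_eq_sum_left]
  refine sum_le_sum fun x hx => ?_
  obtain ⟨y, hy, hxy⟩ := h x hx
  exact card_pos.2 ⟨y, mem_filter.2 ⟨hy, hxy⟩⟩

end EdgeCount

lemma SimpleGraph.isIndepSet_insert {G : SimpleGraph V} {s : Set V} {x : V} :
    G.IsIndepSet (insert x s) ↔ G.IsIndepSet s ∧ ∀ y ∈ s, x ≠ y → ¬G.Adj x y := by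
  simp only [isIndepSet_iff, Set.pairwise_insert, G.adj_comm _ x, and_self]

section Recolouring

variable [Fintype V] [DecidableEq V] {G : SimpleGraph V} {P : Finset (Finset V)} {r s t : ℕ}

namespace IsRST

lemma eq_of_mem (hP : IsRST G P r s t) {B C : Finset V} {v : V} (hB : B ∈ P) (hC : C ∈ P)
    (hvB : v ∈ B) (hvC : v ∈ C) : B = C :=
  (hP.1 v).unique ⟨hB, hvB⟩ ⟨hC, hvC⟩

lemma disjoint_of_card_ne (hP : IsRST G P r s t) {B C : Finset V} (hB : B ∈ P) (hC : C ∈ P)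
    (hBC : #B ≠ #C) : Disjoint B C :=
  disjoint_left.2 fun _ hvB hvC => hBC (by rw [hP.eq_of_mem hB hC hvB hvC])

lemma notMem_of_card_ne_one (hP : IsRST G P r s t) {w : V} {B : Finset V} (hw : {w} ∈ P)
    (hB : B ∈ P) (hB1 : #B ≠ 1) : w ∉ B :=
  disjoint_singleton_left.1 (hP.disjoint_of_card_ne hw hB (by rw [card_singleton]; omega))

lemma isIndepSet (hP : IsRST G P r s t) {B : Finset V} (hB : B ∈ P) : G.IsIndepSet (B : Set V) :=
  fun u hu v hv _ => hP.2.1 B hB u hu v hv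

lemma exchange (hP : IsRST G P r s t) {Q Q' : Finset (Finset V)} (hQ : Q ⊆ P)
    (hQ'ind : ∀ B ∈ Q', G.IsIndepSet (B : Set V))
    (hQ'card : ∀ B ∈ Q', #B = 1 ∨ #B = 2 ∨ #B = 3)
    (hQ'disj : (Q' : Set (Finset V)).PairwiseDisjoint id)
    (hunion : Q'.biUnion id = Q.biUnion id) :
    IsRST G (P \ Q ∪ Q') #{B ∈ P \ Q ∪ Q' | #B = 3} #{B ∈ P \ Q ∪ Q' | #B = 2}
      #{B ∈ P \ Q ∪ Q' | #B = 1} := by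
  refine ⟨fun v => ?_, fun B hB u hu v hv => ?_, rfl, rfl, rfl, fun B hB => ?_⟩
  · by_cases hv : v ∈ Q.biUnion id
    · obtain ⟨B, hB, hvB⟩ := mem_biUnion.1 (hunion ▸ hv)
      refine ⟨B, ⟨mem_union_right _ hB, hvB⟩, fun C ⟨hC, hvC⟩ => ?_⟩
      rcases mem_union.1 hC with hC | hC
      · obtain ⟨D, hD, hvD⟩ := mem_biUnion.1 hv
        exact absurd (hP.eq_of_mem (mem_sdiff.1 hC).1 (hQ hD) hvC hvD ▸ hD) (mem_sdiff.1 hC).2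
      · exact hQ'disj.elim (mem_coe.2 hC) (mem_coe.2 hB) (not_disjoint_iff.2 ⟨v, hvC, hvB⟩)
    · obtain ⟨B, ⟨hB, hvB⟩, huniq⟩ := hP.1 v
      have hBQ : B ∉ Q := fun hBQ => hv (mem_biUnion.2 ⟨B, hBQ, hvB⟩)
      refine ⟨B, ⟨mem_union_left _ (mem_sdiff.2 ⟨hB, hBQ⟩), hvB⟩, fun C ⟨hC, hvC⟩ => ?_⟩
      rcases mem_union.1 hC with hC | hC
      · exact huniq C ⟨(mem_sdiff.1 hC).1, hvC⟩
      · exact absurd (hunion ▸ mem_biUnion.2 ⟨C, hC, hvC⟩) hv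
  · rcases mem_union.1 hB with hB | hB
    · exact hP.2.1 B (mem_sdiff.1 hB).1 u hu v hv
    · exact fun huv => hQ'ind B hB hu hv (G.ne_of_adj huv) huv
  · rcases mem_union.1 hB with hB | hB
    · exact hP.2.2.2.2.2 B (mem_sdiff.1 hB).1
    · exact hQ'card B hB

end IsRST

namespace IsMaxRST

lemma le {P' : Finset (Finset V)} {r' s' t' : ℕ} (h : IsMaxRST G P r s t)
    (h' : IsRST G P' r' s' t') : r' ≤ r := by
  rcases h.2 P' r' s' t' h' with hlt | ⟨heq, -⟩ <;> omega

lemma card_triples_le_of_exchange (h : IsMaxRST G P r s t) {Q Q' : Finset (Finset V)}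
    (hQ : Q ⊆ P) (hQ'ind : ∀ B ∈ Q', G.IsIndepSet (B : Set V))
    (hQ'card : ∀ B ∈ Q', #B = 1 ∨ #B = 2 ∨ #B = 3)
    (hQ'disj : (Q' : Set (Finset V)).PairwiseDisjoint id)
    (hunion : Q'.biUnion id = Q.biUnion id) :
    #{B ∈ Q' | #B = 3} ≤ #{B ∈ Q | #B = 3} := by
  have hdisj : Disjoint (P \ Q) Q' := by
    refine disjoint_left.2 fun B hB hBQ' => ?_
    obtain ⟨v, hv⟩ : B.Nonempty := by
      rw [← card_pos]; rcases hQ'card B hBQ' with hB | hB | hB <;> omega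
    obtain ⟨C, hC, hvC⟩ := mem_biUnion.1 (hunion ▸ mem_biUnion.2 ⟨B, hBQ', hv⟩)
    exact (mem_sdiff.1 hB).2 (h.1.eq_of_mem (mem_sdiff.1 hB).1 (hQ hC) hv hvC ▸ hC)
  have hle := h.le (h.1.exchange hQ hQ'ind hQ'card hQ'disj hunion)
  have hr : #{B ∈ P \ Q | #B = 3} + #{B ∈ Q | #B = 3} = r := by
    rw [← card_union_of_disjoint (disjoint_filter_filter sdiff_disjoint), ← filter_union,
      sdiff_union_of_subset hQ, h.1.2.2.1]
  rw [filter_union, card_union_of_disjoint (disjoint_filter_filter hdisj)] at hle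
  omega

lemma false_of_split (h : IsMaxRST G P r s t) {w : V} {X U Y₁ Y₂ : Finset V} (hw : {w} ∈ P)
    (hX : X ∈ P) (hU : U ∈ P) (hU2 : #U = 2) (hY₁ : #Y₁ = 3) (hY₂ : #Y₂ = 3)
    (hY₁i : G.IsIndepSet (Y₁ : Set V)) (hY₂i : G.IsIndepSet (Y₂ : Set V)) (hdisj : Disjoint Y₁ Y₂)
    (hunion : Y₁ ∪ Y₂ = X ∪ insert w U) : False := by
  have hne : Y₁ ≠ Y₂ := by
    rintro rfl
    simp [(disjoint_self_iff_empty _).1 hdisj] at hY₁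
  have hle := h.card_triples_le_of_exchange (Q := {{w}, X, U}) (Q' := {Y₁, Y₂})
    (by simp [insert_subset_iff, hw, hX, hU]) (by simp [hY₁i, hY₂i]) (by simp [hY₁, hY₂])
    (by simp [Set.PairwiseDisjoint, Set.pairwise_insert, Function.onFun, hdisj, hdisj.symm, hne])
    (by simp only [biUnion_insert, singleton_biUnion, id, hunion]; ext; simp)
  have h2 : #{B ∈ ({Y₁, Y₂} : Finset (Finset V)) | #B = 3} = 2 := by
    rw [filter_true_of_mem (by simp [hY₁, hY₂]), card_pair hne]
  have h1 : #{B ∈ ({{w}, X, U} : Finset (Finset V)) | #B = 3} ≤ 1 := by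
    simp only [filter_insert, filter_singleton, card_singleton, hU2]
    split_ifs <;> simp_all
  omega

end IsMaxRST

end Recolouring

lemma Finset.insert_erase_union_insert_erase [DecidableEq V] {X Z : Finset V} {x y : V}
    (hx : x ∈ X) (hy : y ∈ Z) : insert x (Z.erase y) ∪ insert y (X.erase x) = X ∪ Z := by
  ext v
  simp only [mem_union, mem_insert, mem_erase]
  grind

lemma Finset.disjoint_insert_erase_insert_erase [DecidableEq V] {X Z : Finset V} {x y : V}
    (hXZ : Disjoint X Z) (hx : x ∈ X) (hy : y ∈ Z) :
    Disjoint (insert x (Z.erase y)) (insert y (X.erase x)) := by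
  rw [disjoint_left] at hXZ ⊢
  simp only [mem_insert, mem_erase]
  grind

section MaximalColoring

variable [Fintype V] [DecidableEq V] {G : SimpleGraph V} {P : Finset (Finset V)} {r s t : ℕ}
  {w : V} {X U : Finset V}

lemma IsMaxRST.false_of_swap (h : IsMaxRST G P r s t) (hw : {w} ∈ P) (hX : X ∈ P)
    (hX3 : #X = 3) (hU : U ∈ P) (hU2 : #U = 2) {x y : V} (hx : x ∈ X) (hy : y ∈ insert w U)
    (hind₁ : G.IsIndepSet ↑(insert x ((insert w U).erase y)))
    (hind₂ : G.IsIndepSet ↑(insert y (X.erase x))) : False := by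
  have hwU : w ∉ U := h.1.notMem_of_card_ne_one hw hU (by omega)
  have hw_notMem : w ∉ X := h.1.notMem_of_card_ne_one hw hX (by omega)
  have hXZ : Disjoint X (insert w U) :=
    disjoint_insert_right.2 ⟨hw_notMem, h.1.disjoint_of_card_ne hX hU (by omega)⟩
  refine h.false_of_split hw hX hU hU2 ?_ ?_ hind₁ hind₂
    (disjoint_insert_erase_insert_erase hXZ hx hy) (insert_erase_union_insert_erase hx hy)
  · rw [card_insert_of_notMem fun hx' => disjoint_left.1 hXZ hx (mem_of_mem_erase hx'),
      card_erase_of_mem hy, card_insert_of_notMem hwU, hU2]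
  · rw [card_insert_of_notMem fun hy' => disjoint_right.1 hXZ hy (mem_of_mem_erase hy'),
      card_erase_of_mem hx, hX3]

lemma IsMaxRST.exists_adj_of_mem_triple (h : IsMaxRST G P r s t) (hw : {w} ∈ P) (hX : X ∈ P)
    (hX3 : #X = 3) (hU : U ∈ P) (hU2 : #U = 2) (hwX : ∀ x ∈ X, ¬G.Adj w x) :
    ∀ x ∈ X, ∃ y ∈ U, G.Adj x y := by
  by_contra! ⟨x, hx, hxU⟩
  have hwU : w ∉ U := h.1.notMem_of_card_ne_one hw hU (by omega)
  refine h.false_of_swap hw hX hX3 hU hU2 hx (mem_insert_self w U) ?_ ?_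
  · rw [erase_insert hwU, coe_insert, SimpleGraph.isIndepSet_insert]
    exact ⟨h.1.isIndepSet hU, fun y hy _ => hxU y hy⟩
  · rw [coe_insert, SimpleGraph.isIndepSet_insert]
    exact ⟨(h.1.isIndepSet hX).mono (coe_subset.2 (erase_subset x X)),
      fun y hy _ => hwX y (mem_of_mem_erase hy)⟩

lemma IsMaxRST.exists_adj_singleton (h : IsMaxRST G P r s t) (hw : {w} ∈ P) (hX : X ∈ P)
    (hX3 : #X = 3) (hU : U ∈ P) (hU2 : #U = 2) : ∃ y ∈ U, G.Adj w y := by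
  by_contra! hno
  have hwU : w ∉ U := h.1.notMem_of_card_ne_one hw hU (by omega)
  have hw_notMem : w ∉ X := h.1.notMem_of_card_ne_one hw hX (by omega)
  refine h.false_of_split hw hX hU hU2 (Y₁ := insert w U) (Y₂ := X)
    (by rw [card_insert_of_notMem hwU, hU2]) hX3 ?_ (h.1.isIndepSet hX)
    (disjoint_insert_left.2 ⟨hw_notMem, (h.1.disjoint_of_card_ne hX hU (by omega)).symm⟩)
    (union_comm _ _)
  rw [coe_insert, SimpleGraph.isIndepSet_insert]
  exact ⟨h.1.isIndepSet hU, fun y hy _ => hno y hy⟩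

lemma IsMaxRST.exists_three_le_card_adj_of_adj_of_not_adj [DecidableRel G.Adj]
    (h : IsMaxRST G P r s t) (hw : {w} ∈ P) (hX : X ∈ P) (hX3 : #X = 3) {a b : V}
    (hU : {a, b} ∈ P) (hab : a ≠ b) (hwX : ∀ x ∈ X, ¬G.Adj w x)
    (hXU : ∀ x ∈ X, ∃ y ∈ ({a, b} : Finset V), G.Adj x y)
    (hwa : G.Adj w a) (hwb : ¬G.Adj w b) :
    ∃ β ∈ ({a, b} : Finset V), 3 ≤ #{x ∈ insert w X | G.Adj x β} := by
  by_contra! hlt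
  have hU2 : #({a, b} : Finset V) = 2 := card_pair hab
  have hw_notMem : w ∉ X := h.1.notMem_of_card_ne_one hw hX (by omega)
  obtain ⟨a₀, ha₀, ha₀b⟩ : ∃ a₀ ∈ X, a₀ ∉ ({x ∈ X | G.Adj x b} : Finset V) := by
    refine exists_mem_notMem_of_card_lt_card ?_
    have := hlt b (by simp)
    rw [filter_insert, if_neg hwb] at this
    omega
  replace ha₀b : ¬G.Adj a₀ b := fun hadj => ha₀b (mem_filter.2 ⟨ha₀, hadj⟩)
  have ha₀a : G.Adj a₀ a := by
    obtain ⟨y, hy, hadj⟩ := hXU a₀ ha₀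
    rcases mem_insert.1 hy with rfl | hy
    · exact hadj
    · exact absurd (mem_singleton.1 hy ▸ hadj) ha₀b
  have hXa : ∀ x ∈ X.erase a₀, ¬G.Adj a x := by
    intro x hx hax
    have hsub : {w, a₀, x} ⊆ ({y ∈ insert w X | G.Adj y a} : Finset V) := by
      simp [insert_subset_iff, hwa, ha₀a, hax.symm, ha₀, mem_of_mem_erase hx]
    have hcard : #({w, a₀, x} : Finset V) = 3 := by
      rw [card_eq_three]
      exact ⟨w, a₀, x, fun e => hw_notMem (e ▸ ha₀), fun e => hw_notMem (e ▸ mem_of_mem_erase hx),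
        fun e => (ne_of_mem_erase hx) e.symm, rfl⟩
    have := card_le_card hsub
    have := hlt a (by simp)
    omega
  refine h.false_of_swap hw hX hX3 hU hU2 ha₀ (y := a) (by simp) ?_ ?_
  · rw [erase_insert_of_ne (G.ne_of_adj hwa), erase_insert (by simpa using hab)]
    simp [SimpleGraph.isIndepSet_iff, Set.pairwise_insert, hwb, ha₀b, hwX a₀ ha₀, G.adj_comm]
  · rw [coe_insert, SimpleGraph.isIndepSet_insert]
    exact ⟨(h.1.isIndepSet hX).mono (coe_subset.2 (erase_subset a₀ X)),
      fun y hy _ => hXa y hy⟩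

lemma IsMaxRST.exists_three_le_eB [DecidableRel G.Adj] (h : IsMaxRST G P r s t) (hw : {w} ∈ P)
    (hX : X ∈ P) (hX3 : #X = 3) (hU : U ∈ P) (hU2 : #U = 2) (hwX : ∀ x ∈ X, ¬G.Adj w x) :
    ∃ β ∈ U, 3 ≤ eB G (insert w X) {β} := by
  simp only [eB_singleton_right]
  obtain ⟨a, b, hab, rfl⟩ := card_eq_two.1 hU2
  have hXU := h.exists_adj_of_mem_triple hw hX hX3 hU hU2 hwX
  obtain ⟨y, hy, hwy⟩ := h.exists_adj_singleton hw hX hX3 hU hU2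
  by_cases hwa : G.Adj w a <;> by_cases hwb : G.Adj w b
  · by_contra! hlt
    have hw_notMem : w ∉ X := h.1.notMem_of_card_ne_one hw hX (by omega)
    have hsum : 3 ≤ #{x ∈ X | G.Adj x a} + #{x ∈ X | G.Adj x b} := by
      have := card_le_eB_of_forall_exists_adj G hXU
      rwa [eB_eq_sum_right, sum_pair hab, hX3] at this
    have ha := hlt a (by simp)
    have hb := hlt b (by simp)
    rw [filter_insert, if_pos hwa, card_insert_of_notMem (by simp [hw_notMem])] at ha
    rw [filter_insert, if_pos hwb, card_insert_of_notMem (by simp [hw_notMem])] at hb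
    omega
  · exact h.exists_three_le_card_adj_of_adj_of_not_adj hw hX hX3 hU hab hwX hXU hwa hwb
  · rw [pair_comm] at hU hXU ⊢
    exact h.exists_three_le_card_adj_of_adj_of_not_adj hw hX hX3 hU hab.symm hwX hXU hwb hwa
  · simp only [mem_insert, mem_singleton] at hy
    rcases hy with rfl | rfl <;> contradiction

end MaximalColoring

theorem stmt8 [Fintype V] [DecidableEq V] (G : SimpleGraph V) [DecidableRel G.Adj]
    (P : Finset (Finset V)) (r s t : ℕ)
    (h : IsMaxRST G P r s t)
    (A X : Finset V) (w : V)
    (hA : A ∈ P) (hAw : A = {w})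
    (hX : X ∈ P) (hX3 : X.card = 3)
    (h0 : eB G {w} X = 0) :
    ∀ U ∈ P, U.card = 2 →
      3 ≤ eB G X U ∧ 4 ≤ eB G (insert w X) U ∧
        ∃ β ∈ U, 3 ≤ eB G (insert w X) {β} := by
  subst hAw
  have hwX : ∀ x ∈ X, ¬G.Adj w x := by
    simpa [eB_singleton_left, filter_eq_empty_iff] using h0
  intro U hU hU2
  have hXU : 3 ≤ eB G X U :=
    hX3 ▸ card_le_eB_of_forall_exists_adj G (h.exists_adj_of_mem_triple hA hX hX3 hU hU2 hwX)
  have hwU : 1 ≤ eB G {w} U := by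
    obtain ⟨y, hy, hwy⟩ := h.exists_adj_singleton hA hX hX3 hU hU2
    exact eB_singleton_left G w U ▸ card_pos.2 ⟨y, mem_filter.2 ⟨hy, hwy⟩⟩
  refine ⟨hXU, ?_, h.exists_three_le_eB hA hX hX3 hU hU2 hwX⟩
  rw [eB_insert_left G (h.1.notMem_of_card_ne_one hA hX (by omega))]
  omega
end

section
/- In a maximal [r,s,t]-coloring of a graph G, if there are no edges between a size-3 class X_i and a size-2 class U_j, then (i) every singleton-class vertex w_k has at least 2 neighbors in X_i and at least 4 neighbors in X_i ∪ U_j, and (ii) for every other size-2 class U_{j'} and each vertex γ ∈ U_{j'}, γ has at least 2 neighbors in X_i and at least 4 neighbors in X_i ∪ U_j. -/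
open Finset

variable {V : Type*}

lemma eB_singleton [Fintype V] [DecidableEq V] (G : SimpleGraph V) [DecidableRel G.Adj]
    (w : V) (S : Finset V) : eB G {w} S = (S.filter (G.Adj w)).card := by
  unfold eB
  rw [Finset.singleton_product, Finset.filter_map, Finset.card_map]
  rfl

lemma key_lemma [Fintype V] [DecidableEq V] (G : SimpleGraph V) [DecidableRel G.Adj]
    (P : Finset (Finset V)) (r s t : ℕ)
    (h : IsMaxRST G P r s t)
    (X U : Finset V)
    (hX : X ∈ P) (hX3 : X.card = 3) (hU : U ∈ P) (hU2 : U.card = 2)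
    (h0 : eB G X U = 0)
    (C : Finset V) (hC : C ∈ P) (hCU : C ≠ U) (hCle : C.card ≤ 2)
    (w : V) (hw : w ∈ C) :
    4 ≤ eB G {w} (X ∪ U) := by
  obtain ⟨⟨huniq, hindep, hr3, hs2, ht1, hsz⟩, hmax⟩ := h
  have disj : ∀ {A B : Finset V} {v : V}, A ∈ P → B ∈ P → v ∈ A → v ∈ B → A = B := by
    intro A B v hA hB hvA hvB
    obtain ⟨D, _, hDu⟩ := huniq v
    exact (hDu _ ⟨hA, hvA⟩).trans (hDu _ ⟨hB, hvB⟩).symm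
  have hCX : C ≠ X := by intro e; rw [e, hX3] at hCle; omega
  have hwX : w ∉ X := fun h' => hCX (disj hC hX hw h')
  have hwU : w ∉ U := fun h' => hCU (disj hC hU hw h')
  set S : Finset V := X ∪ U with hSdef
  have hwS : w ∉ S := by simp [hSdef, hwX, hwU]
  have hXU0 : ∀ x ∈ X, ∀ y ∈ U, ¬ G.Adj x y := by
    intro x hx y hy hadj
    have hmem : (x, y) ∈ (X ×ˢ U).filter (fun p => G.Adj p.1 p.2) := by
      simp [Finset.mem_filter, Finset.mem_product, hx, hy, hadj]
    have := Finset.card_eq_zero.mp h0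
    rw [this] at hmem
    exact absurd hmem (Finset.notMem_empty _)
  have hSind : ∀ x ∈ S, ∀ y ∈ S, ¬ G.Adj x y := by
    intro x hx y hy
    rcases Finset.mem_union.1 hx with hx' | hx' <;> rcases Finset.mem_union.1 hy with hy' | hy'
    · exact hindep X hX x hx' y hy'
    · exact hXU0 x hx' y hy'
    · exact fun a => hXU0 y hy' x hx' a.symm
    · exact hindep U hU x hx' y hy'
  have hXUdisj : Disjoint X U := by
    rw [Finset.disjoint_left]
    intro v hvX hvU
    have := disj hX hU hvX hvU
    rw [this, hU2] at hX3; omega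
  have hS5 : S.card = 5 := by
    rw [hSdef, Finset.card_union_of_disjoint hXUdisj, hX3, hU2]
  by_contra hlt
  push_neg at hlt
  rw [eB_singleton] at hlt
  have hnn : 2 ≤ (S.filter (fun x => ¬ G.Adj w x)).card := by
    have htot := Finset.card_filter_add_card_filter_not (s := S) (p := G.Adj w)
    omega
  obtain ⟨a, ha, b, hb, hab⟩ := Finset.one_lt_card.mp hnn
  rw [Finset.mem_filter] at ha hb
  obtain ⟨haS, haw⟩ := ha
  obtain ⟨hbS, hbw⟩ := hb
  have haw' : a ≠ w := fun e => hwS (e ▸ haS)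
  have hbw' : b ≠ w := fun e => hwS (e ▸ hbS)
  set A1 : Finset V := {a, b, w} with hA1def
  set A2 : Finset V := S \ {a, b} with hA2def
  have habS : ({a, b} : Finset V) ⊆ S := by
    intro x hx; rcases Finset.mem_insert.1 hx with rfl | hx
    · exact haS
    · rw [Finset.mem_singleton] at hx; exact hx ▸ hbS
  have hab2 : ({a, b} : Finset V).card = 2 := by
    rw [Finset.card_insert_of_notMem (by simp [hab]), Finset.card_singleton]
  have hA1card : A1.card = 3 := by
    rw [hA1def, Finset.card_insert_of_notMem (by simp [hab, haw']),
      Finset.card_insert_of_notMem (by simp [hbw']), Finset.card_singleton]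
  have hA2card : A2.card = 3 := by
    rw [hA2def, Finset.card_sdiff_of_subset habS, hab2, hS5]
  have hA1mem : ∀ v ∈ A1, v = a ∨ v = b ∨ v = w := by
    intro v hv; simpa [hA1def] using hv
  have hwA1 : w ∈ A1 := by simp [hA1def]
  have hwA2 : w ∉ A2 := fun h' => hwS (Finset.mem_sdiff.1 h').1
  have hA2S : A2 ⊆ S := Finset.sdiff_subset
  set base : Finset (Finset V) := ((P.erase X).erase U).erase C with hbasedef
  have hbase : ∀ B ∈ base, B ∈ P ∧ B ≠ X ∧ B ≠ U ∧ B ≠ C := by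
    intro B hB
    simp only [hbasedef, Finset.mem_erase] at hB
    exact ⟨hB.2.2.2, hB.2.2.1, hB.2.1, hB.1⟩
  have hCSdisj : ∀ v ∈ C, v ∉ S := by
    intro v hv hvS
    rcases Finset.mem_union.1 hvS with h' | h'
    · exact hCX (disj hC hX hv h')
    · exact hCU (disj hC hU hv h')
  have hbaseS : ∀ B ∈ base, ∀ v ∈ B, v ∉ S ∧ v ∉ C := by
    intro B hB v hv
    obtain ⟨hBP, hBX, hBU, hBC⟩ := hbase B hB
    refine ⟨fun hvS => ?_, fun hvC => hBC (disj hBP hC hv hvC)⟩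
    rcases Finset.mem_union.1 hvS with h' | h'
    · exact hBX (disj hBP hX hv h')
    · exact hBU (disj hBP hU hv h')
  set D : Finset V := C.erase w with hDdef
  set P' : Finset (Finset V) :=
    (insert A1 (insert A2 base)) ∪ D.image (fun x => ({x} : Finset V)) with hP'def
  have hmemP' : ∀ {B : Finset V}, B ∈ P' ↔
      B = A1 ∨ B = A2 ∨ B ∈ base ∨ ∃ d ∈ D, B = {d} := by
    intro B
    simp only [hP'def, Finset.mem_union, Finset.mem_insert, Finset.mem_image]
    constructor
    · rintro ((h | h | h) | ⟨d, hd, rfl⟩)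
      · exact Or.inl h
      · exact Or.inr (Or.inl h)
      · exact Or.inr (Or.inr (Or.inl h))
      · exact Or.inr (Or.inr (Or.inr ⟨d, hd, rfl⟩))
    · rintro (h | h | h | ⟨d, hd, rfl⟩)
      · exact Or.inl (Or.inl h)
      · exact Or.inl (Or.inr (Or.inl h))
      · exact Or.inl (Or.inr (Or.inr h))
      · exact Or.inr ⟨d, hd, rfl⟩
  -- pairwise disjointness
  have pdisj : ∀ A ∈ P', ∀ B ∈ P', ∀ v, v ∈ A → v ∈ B → A = B := by
    have hA1S : ∀ v ∈ A1, (v ∈ S ∧ (v = a ∨ v = b)) ∨ v = w := by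
      intro v hv
      rcases hA1mem v hv with rfl | rfl | rfl
      · exact Or.inl ⟨haS, Or.inl rfl⟩
      · exact Or.inl ⟨hbS, Or.inr rfl⟩
      · exact Or.inr rfl
    have h12 : ∀ v, v ∈ A1 → v ∈ A2 → False := by
      intro v h1 h2
      rw [hA2def, Finset.mem_sdiff] at h2
      rcases hA1S v h1 with ⟨_, hvab⟩ | rfl
      · exact h2.2 (by simpa using hvab)
      · exact hwS h2.1
    have h1base : ∀ B ∈ base, ∀ v, v ∈ A1 → v ∈ B → False := by
      intro B hB v h1 hvB
      obtain ⟨hnS, hnC⟩ := hbaseS B hB v hvB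
      rcases hA1S v h1 with ⟨hvS, _⟩ | rfl
      · exact hnS hvS
      · exact hnC hw
    have h2base : ∀ B ∈ base, ∀ v, v ∈ A2 → v ∈ B → False := by
      intro B hB v h2 hvB
      exact (hbaseS B hB v hvB).1 (hA2S h2)
    have h1d : ∀ d ∈ D, ∀ v, v ∈ A1 → v ∈ ({d} : Finset V) → False := by
      intro d hd v h1 hvd
      rw [Finset.mem_singleton] at hvd
      subst hvd
      rw [hDdef, Finset.mem_erase] at hd
      rcases hA1S v h1 with ⟨hvS, _⟩ | rfl
      · exact hCSdisj v hd.2 hvS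
      · exact hd.1 rfl
    have h2d : ∀ d ∈ D, ∀ v, v ∈ A2 → v ∈ ({d} : Finset V) → False := by
      intro d hd v h2 hvd
      rw [Finset.mem_singleton] at hvd
      subst hvd
      rw [hDdef, Finset.mem_erase] at hd
      exact hCSdisj v hd.2 (hA2S h2)
    have hbased : ∀ B ∈ base, ∀ d ∈ D, ∀ v, v ∈ B → v ∈ ({d} : Finset V) → False := by
      intro B hB d hd v hvB hvd
      rw [Finset.mem_singleton] at hvd
      subst hvd
      rw [hDdef, Finset.mem_erase] at hd
      exact (hbaseS B hB v hvB).2 hd.2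
    intro A hA B hB v hvA hvB
    rcases hmemP'.1 hA with rfl | rfl | hA' | ⟨d, hd, rfl⟩ <;>
      rcases hmemP'.1 hB with rfl | rfl | hB' | ⟨e, he, rfl⟩
    · rfl
    · exact absurd (h12 v hvA hvB) (by simp)
    · exact absurd (h1base B hB' v hvA hvB) (by simp)
    · exact absurd (h1d e he v hvA hvB) (by simp)
    · exact absurd (h12 v hvB hvA) (by simp)
    · rfl
    · exact absurd (h2base B hB' v hvA hvB) (by simp)
    · exact absurd (h2d e he v hvA hvB) (by simp)
    · exact absurd (h1base A hA' v hvB hvA) (by simp)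
    · exact absurd (h2base A hA' v hvB hvA) (by simp)
    · exact disj (hbase A hA').1 (hbase B hB').1 hvA hvB
    · exact absurd (hbased A hA' e he v hvA hvB) (by simp)
    · exact absurd (h1d d hd v hvB hvA) (by simp)
    · exact absurd (h2d d hd v hvB hvA) (by simp)
    · exact absurd (hbased B hB' d hd v hvB hvA) (by simp)
    · rw [Finset.mem_singleton] at hvA hvB; rw [← hvA, hvB]
  -- cover
  have cover : ∀ v : V, ∃ A ∈ P', v ∈ A := by
    intro v
    by_cases hvS : v ∈ S
    · by_cases hvab : v = a ∨ v = b
      · refine ⟨A1, hmemP'.2 (Or.inl rfl), ?_⟩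
        rcases hvab with rfl | rfl
        · simp [hA1def]
        · simp [hA1def]
      · push_neg at hvab
        refine ⟨A2, hmemP'.2 (Or.inr (Or.inl rfl)), ?_⟩
        rw [hA2def, Finset.mem_sdiff]
        exact ⟨hvS, by simp [hvab.1, hvab.2]⟩
    · by_cases hvC : v ∈ C
      · by_cases hvw : v = w
        · exact ⟨A1, hmemP'.2 (Or.inl rfl), hvw ▸ hwA1⟩
        · refine ⟨{v}, hmemP'.2 (Or.inr (Or.inr (Or.inr ⟨v, ?_, rfl⟩))), Finset.mem_singleton_self v⟩
          rw [hDdef, Finset.mem_erase]; exact ⟨hvw, hvC⟩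
      · obtain ⟨B, ⟨hBP, hvB⟩, _⟩ := huniq v
        have hBX : B ≠ X := fun e => hvS (Finset.mem_union.2 (Or.inl (e ▸ hvB)))
        have hBU : B ≠ U := fun e => hvS (Finset.mem_union.2 (Or.inr (e ▸ hvB)))
        have hBC : B ≠ C := fun e => hvC (e ▸ hvB)
        refine ⟨B, hmemP'.2 (Or.inr (Or.inr (Or.inl ?_))), hvB⟩
        rw [hbasedef]
        simp only [Finset.mem_erase]
        exact ⟨hBC, hBU, hBX, hBP⟩
  have hpart : ∀ v : V, ∃! A, A ∈ P' ∧ v ∈ A := by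
    intro v
    obtain ⟨A, hA, hvA⟩ := cover v
    exact ⟨A, ⟨hA, hvA⟩, fun B hB => pdisj B hB.1 A hA v hB.2 hvA⟩
  -- independence
  have hindep' : ∀ A ∈ P', ∀ u ∈ A, ∀ x ∈ A, ¬ G.Adj u x := by
    intro A hA u hu x hx
    rcases hmemP'.1 hA with rfl | rfl | hA' | ⟨d, hd, rfl⟩
    · rcases hA1mem u hu with h1 | h1 | h1 <;> rcases hA1mem x hx with h2 | h2 | h2 <;>
        rw [h1, h2]
      · exact G.irrefl
      · exact hSind a haS b hbS
      · exact fun h' => haw h'.symm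
      · exact hSind b hbS a haS
      · exact G.irrefl
      · exact fun h' => hbw h'.symm
      · exact haw
      · exact hbw
      · exact G.irrefl
    · exact hSind u (hA2S hu) x (hA2S hx)
    · exact hindep A (hbase A hA').1 u hu x hx
    · rw [Finset.mem_singleton] at hu hx
      rw [hu, hx]; exact G.irrefl
  -- sizes
  have hsz' : ∀ A ∈ P', A.card = 1 ∨ A.card = 2 ∨ A.card = 3 := by
    intro A hA
    rcases hmemP'.1 hA with rfl | rfl | hA' | ⟨d, hd, rfl⟩
    · exact Or.inr (Or.inr hA1card)
    · exact Or.inr (Or.inr hA2card)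
    · exact hsz A (hbase A hA').1
    · exact Or.inl (Finset.card_singleton d)
  have hRST : IsRST G P' (P'.filter (fun A => A.card = 3)).card
      (P'.filter (fun A => A.card = 2)).card (P'.filter (fun A => A.card = 1)).card :=
    ⟨hpart, hindep', rfl, rfl, rfl, hsz'⟩
  -- compute r'
  have hA1ne2 : A1 ≠ A2 := fun e => hwA2 (e ▸ hwA1)
  have hA1nP : A1 ∉ P := by
    intro hA1P
    have := disj hA1P hC hwA1 hw
    rw [this] at hA1card
    omega
  have hA2nbase : A2 ∈ P → A2 = X ∨ A2 = U := by
    intro hA2P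
    have : A2.Nonempty := Finset.card_pos.mp (by omega)
    obtain ⟨v, hv⟩ := this
    rcases Finset.mem_union.1 (hA2S hv) with h' | h'
    · exact Or.inl (disj hA2P hX hv h')
    · exact Or.inr (disj hA2P hU hv h')
  have himg3 : (D.image (fun x => ({x} : Finset V))).filter (fun A => A.card = 3) = ∅ := by
    apply Finset.filter_false_of_mem
    intro A hA
    obtain ⟨d, _, rfl⟩ := Finset.mem_image.1 hA
    simp
  have hfilter3 : P'.filter (fun A => A.card = 3)
      = insert A1 (insert A2 ((P.filter (fun A => A.card = 3)).erase X)) := by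
    rw [hP'def, Finset.filter_union, himg3, Finset.union_empty,
      Finset.filter_insert, if_pos hA1card, Finset.filter_insert, if_pos hA2card]
    congr 2
    rw [hbasedef, Finset.filter_erase, Finset.filter_erase, Finset.filter_erase]
    rw [Finset.erase_eq_of_notMem (a := U) (by
      simp only [Finset.mem_erase, Finset.mem_filter]
      rintro ⟨-, -, h2⟩; omega)]
    rw [Finset.erase_eq_of_notMem (a := C) (by
      simp only [Finset.mem_erase, Finset.mem_filter]
      rintro ⟨-, -, h2⟩; omega)]
  have hXmem3 : X ∈ P.filter (fun A => A.card = 3) := Finset.mem_filter.2 ⟨hX, hX3⟩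
  have hr1 : 1 ≤ r := by
    rw [← hr3]
    exact Finset.card_pos.2 ⟨X, hXmem3⟩
  have hr' : (P'.filter (fun A => A.card = 3)).card = r + 1 := by
    rw [hfilter3]
    rw [Finset.card_insert_of_notMem, Finset.card_insert_of_notMem,
      Finset.card_erase_of_mem hXmem3, hr3]
    · omega
    · intro hmem
      rw [Finset.mem_erase, Finset.mem_filter] at hmem
      rcases hA2nbase hmem.2.1 with h' | h'
      · exact hmem.1 h'
      · have h2 := hA2card
        rw [h'] at h2
        omega
    · intro hmem
      rcases Finset.mem_insert.1 hmem with e | hmem'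
      · exact hA1ne2 e
      · rw [Finset.mem_erase, Finset.mem_filter] at hmem'
        exact hA1nP hmem'.2.1
  rcases hmax P' _ _ _ hRST with h' | h'
  · omega
  · omega

lemma eB_union_le [Fintype V] [DecidableEq V] (G : SimpleGraph V) [DecidableRel G.Adj]
    (w : V) (X U : Finset V) : eB G {w} (X ∪ U) ≤ eB G {w} X + U.card := by
  rw [eB_singleton, eB_singleton, Finset.filter_union]
  calc (X.filter (G.Adj w) ∪ U.filter (G.Adj w)).card
      ≤ (X.filter (G.Adj w)).card + (U.filter (G.Adj w)).card := Finset.card_union_le _ _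
    _ ≤ (X.filter (G.Adj w)).card + U.card :=
        Nat.add_le_add_left (Finset.card_filter_le _ _) _

theorem stmt11 [Fintype V] [DecidableEq V] (G : SimpleGraph V) [DecidableRel G.Adj]
    (P : Finset (Finset V)) (r s t : ℕ)
    (h : IsMaxRST G P r s t)
    (X U : Finset V)
    (hX : X ∈ P) (hX3 : X.card = 3) (hU : U ∈ P) (hU2 : U.card = 2)
    (h0 : eB G X U = 0) :
    (∀ A ∈ P, A.card = 1 → ∀ w ∈ A,
      2 ≤ eB G {w} X ∧ 4 ≤ eB G {w} (X ∪ U)) ∧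
    (∀ U' ∈ P, U'.card = 2 → U' ≠ U → ∀ γ ∈ U',
      2 ≤ eB G {γ} X ∧ 4 ≤ eB G {γ} (X ∪ U)) := by
  constructor
  · intro A hA hA1 w hw
    have h4 : 4 ≤ eB G {w} (X ∪ U) :=
      key_lemma G P r s t h X U hX hX3 hU hU2 h0 A hA
        (fun e => by rw [e, hU2] at hA1; omega) (by omega) w hw
    have hle := eB_union_le G w X U
    rw [hU2] at hle
    exact ⟨by omega, h4⟩
  · intro U' hU' hU'2 hne γ hγ
    have h4 : 4 ≤ eB G {γ} (X ∪ U) :=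
      key_lemma G P r s t h X U hX hX3 hU hU2 h0 U' hU' hne (by omega) γ hγ
    have hle := eB_union_le G γ X U
    rw [hU2] at hle
    exact ⟨by omega, h4⟩
end
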